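/- arXiv:2306.06011 — 7 statements merged into one kernel-verified Lean document; each statement's English description precedes it below -/
import Mathlib

section
/- Let k be a field, let f(x) = f_n x^n + … + f_1 x + f_0 ∈ k[x] be a separable polynomial of degree n with f_n ≠ 0, let L = k[x]/(f) = k[θ], and fix a unit ξ ∈ L^×. Define quadratic forms Q_0, …, Q_{n−1} ∈ k[u_0,…,u_{n−1}] by the identity ξ(u_0 + u_1θ + … + u_{n−1}θ^{n−1})² = Σ_{j=0}^{n−1} Q_j(u_0,…,u_{n−1}) θ^j in L[u_0,…,u_{n−1}]. Let 𝐆 be the n×n matrix with (i,j) entry Tr_{L/k}(f_n ξ θ^{i+j}/f'(θ)) (indices 0 ≤ i,j ≤ n−1) and 𝐇 = 𝐆Θ where Θ is the matrix of multiplication by θ on L in the power basis 1, θ, …, θ^{n−1}. Then 𝐆 and 𝐇 are symmetric, 𝐆 is invertible, and for all 0 ≤ j ≤ n−1, Q_j(u_0,…,u_{n−1}) = f_n^{−1} Σ_{i=j+1}^{n} f_i · 𝐮^T 𝐆 (𝐆^{−1}𝐇)^{i−j−1} 𝐮, where 𝐮 = (u_0,…,u_{n−1})^T. -/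
/-!
Write `T z = Tr_{L/k}(f_n z / f'(θ))`. Over an algebraic closure `K` the roots `ρ₁, …, ρ_n` of `f`
give `n` algebra maps `L → K` whose Vandermonde matrix is invertible, so the trace of `z` is the sum
of its images; Lagrange interpolation of `X^m` then gives Euler's formula `T(θ^m) = [m = n - 1]`
for `m < n`. Together with `f(θ) = 0` this shows that `f_n⁻¹ Σ_{i > j} f_i θ^{i-j-1}` is the dual
basis of the power basis for `(x, y) ↦ T(x y)`, which is the claimed formula for the coordinates
`Q_j` of `ξ w²`. The matrix `𝐆 Θ^p` is the Gram matrix of the symmetric form `T(ξ θ^p x y)`,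
and for `p = 0` this form is nondegenerate by the same duality.
-/

open Polynomial Matrix Finset

namespace Lagrange

theorem sum_pow_div_eval_derivative_nodal {F ι : Type*} [Field F] [DecidableEq ι]
    {s : Finset ι} {v : ι → F} (hvs : Set.InjOn v s) {m : ℕ} (hm : m < #s) :
    ∑ i ∈ s, v i ^ m / eval (v i) (derivative (nodal s v)) = if m = #s - 1 then 1 else 0 := by
  have hX : (X ^ m : F[X]).degree < #s := by rw [degree_X_pow]; exact_mod_cast hm
  have h := coeff_eq_sum hvs hX
  simp only [coeff_X_pow, @eq_comm _ (#s - 1)] at h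
  rw [h]
  refine sum_congr rfl fun i hi => ?_
  rw [eval_pow, eval_X, eval_nodal_derivative_eval_node_eq hi, eval_nodal]

end Lagrange

namespace Polynomial

theorem map_eq_C_mul_nodal_rootSet {k K : Type*} [Field k] [Field K] [Algebra k K] {f : k[X]}
    (hf : f.Separable) (hsplit : Splits (f.map (algebraMap k K))) :
    f.map (algebraMap k K) =
      C (algebraMap k K f.leadingCoeff) * Lagrange.nodal univ ((↑) : f.rootSet K → K) := by
  classical
  conv_lhs => rw [hsplit.eq_prod_roots]
  rw [leadingCoeff_map, Lagrange.nodal, ← prod_subtype (f.aroots K).toFinset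
    (fun x => by rw [rootSet_def, Finset.mem_coe]) (fun x => X - C x),
    prod_eq_multiset_prod, aroots, Multiset.toFinset_val, (nodup_roots hf.map).dedup]

theorem sum_rootSet_pow_div_aeval_derivative {k K : Type*} [Field k] [Field K] [Algebra k K]
    {f : k[X]} (hf : f.Separable) (hsplit : Splits (f.map (algebraMap k K)))
    {m : ℕ} (hm : m < f.natDegree) :
    ∑ ρ : f.rootSet K, (ρ : K) ^ m / aeval (ρ : K) (derivative f) =
      if m = f.natDegree - 1 then (algebraMap k K f.leadingCoeff)⁻¹ else 0 := by
  classical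
  have hcard : #(univ : Finset (f.rootSet K)) = f.natDegree :=
    card_univ.trans (card_rootSet_eq_natDegree hf hsplit)
  have hder (ρ : f.rootSet K) : aeval (ρ : K) (derivative f) =
      algebraMap k K f.leadingCoeff *
        eval (ρ : K) (derivative (Lagrange.nodal univ ((↑) : f.rootSet K → K))) := by
    rw [aeval_def, ← eval_map, ← derivative_map, map_eq_C_mul_nodal_rootSet hf hsplit,
      derivative_C_mul, eval_mul, eval_C]
  simp_rw [hder, div_mul_eq_div_div_swap, div_eq_mul_inv _ (algebraMap k K _), ← sum_mul,
    Lagrange.sum_pow_div_eval_derivative_nodal Subtype.val_injective.injOn (hcard ▸ hm), hcard,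
    ite_mul, one_mul, zero_mul]

end Polynomial

theorem Algebra.algebraMap_trace_eq_sum_algHom_of_isUnit {R A K ι : Type*} [CommRing R]
    [CommRing A] [Algebra R A] [CommRing K] [Algebra R K] [Fintype ι] [DecidableEq ι]
    (b : Module.Basis ι R A) (σ : ι → A →ₐ[R] K)
    (hσ : IsUnit (Matrix.of fun s i => σ s (b i))) (x : A) :
    algebraMap R K (Algebra.trace R A x) = ∑ s, σ s x := by
  set V : Matrix ι ι K := Matrix.of fun s i => σ s (b i)
  set M := (Algebra.leftMulMatrix b x).map (algebraMap R K)
  have hVM : V * M = diagonal (fun s => σ s x) * V := by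
    ext s j
    have hxb : ∑ i, leftMulMatrix b x i j • b i = x * b j := by
      simp_rw [leftMulMatrix_eq_repr_mul, b.sum_repr]
    rw [diagonal_mul, Matrix.mul_apply]
    simpa [V, M, mul_comm, Algebra.smul_def] using congrArg (σ s) hxb
  rw [Algebra.trace_eq_matrix_trace b, AddMonoidHom.map_trace]
  calc Matrix.trace M = Matrix.trace (V⁻¹ * (diagonal (fun s => σ s x) * V)) := by
        rw [← hVM, ← Matrix.mul_assoc, nonsing_inv_mul _ ((isUnit_iff_isUnit_det V).mp hσ),
          Matrix.one_mul]
    _ = ∑ s, σ s x := by rw [← Matrix.mul_assoc, trace_conj' hσ, trace_diagonal]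

namespace AdjoinRoot

theorem algebraMap_trace_mk_eq_sum_rootSet {k K : Type*} [Field k] [Field K] [Algebra k K]
    {f : k[X]} (hf : f.Separable) (hsplit : Splits (f.map (algebraMap k K))) (p : k[X]) :
    algebraMap k K (Algebra.trace k (AdjoinRoot f) (mk f p)) =
      ∑ ρ : f.rootSet K, aeval (ρ : K) p := by
  let pb := powerBasis hf.ne_zero
  let e : Fin pb.dim ≃ f.rootSet K :=
    (Fintype.equivFinOfCardEq (card_rootSet_eq_natDegree hf hsplit)).symm
  let σ (s : Fin pb.dim) : AdjoinRoot f →ₐ[k] K := liftAlgHom f (Algebra.ofId k K) (e s)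
    (by rw [Algebra.toRingHom_ofId, ← aeval_def, aeval_eq_zero_of_mem_rootSet (e s).2])
  have hV : Matrix.of (fun s i => σ s (pb.basis i)) = vandermonde (fun s => (e s : K)) := by
    ext s i
    simp [σ, pb, vandermonde_apply]
  have hσ : IsUnit (Matrix.of fun s i => σ s (pb.basis i)) := by
    rw [hV, isUnit_iff_isUnit_det, isUnit_iff_ne_zero, det_vandermonde_ne_zero_iff]
    exact Subtype.val_injective.comp e.injective
  rw [Algebra.algebraMap_trace_eq_sum_algHom_of_isUnit pb.basis σ hσ,
    ← e.sum_comp (fun ρ => aeval (ρ : K) p)]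
  simp [σ, aeval_def]

theorem leadingCoeff_mul_trace_root_pow_mul {k : Type*} [Field k] {f : k[X]} (hf : f.Separable)
    {d : AdjoinRoot f} (hd : aeval (root f) (derivative f) * d = 1) {m : ℕ}
    (hm : m < f.natDegree) :
    f.leadingCoeff * Algebra.trace k (AdjoinRoot f) (root f ^ m * d) =
      if m = f.natDegree - 1 then 1 else 0 := by
  let K := AlgebraicClosure k
  obtain ⟨e, rfl⟩ := mk_surjective d
  have hdvd : f ∣ derivative f * e - 1 := by
    rw [← mk_eq_zero, map_sub, map_mul, ← aeval_eq, hd, map_one, sub_self]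
  have he (ρ : f.rootSet K) : aeval (ρ : K) e = (aeval (ρ : K) (derivative f))⁻¹ := by
    have h := aeval_eq_zero_of_dvd_aeval_eq_zero hdvd (aeval_eq_zero_of_mem_rootSet ρ.2)
    rw [map_sub, map_mul, map_one, sub_eq_zero] at h
    exact eq_inv_of_mul_eq_one_right h
  apply (algebraMap k K).injective
  rw [map_mul, ← mk_X, ← map_pow, ← map_mul (mk f),
    algebraMap_trace_mk_eq_sum_rootSet hf (IsAlgClosed.splits _)]
  simp_rw [map_mul, map_pow, aeval_X, he, ← div_eq_mul_inv,
    sum_rootSet_pow_div_aeval_derivative hf (IsAlgClosed.splits _) hm]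
  have hlc : algebraMap k K f.leadingCoeff ≠ 0 := by simpa using hf.ne_zero
  split_ifs
  · rw [mul_inv_cancel₀ hlc, map_one]
  · rw [mul_zero, map_zero]

end AdjoinRoot

theorem sum_Icc_mul_shift_eq_ite {R : Type*} [CommRing R] {n : ℕ} (c s : ℕ → R)
    (hs : ∀ m < n, s m = if m = n - 1 then 1 else 0)
    (hrec : ∀ m, ∑ i ∈ range (n + 1), c i * s (m + i) = 0) {a j : ℕ}
    (ha : a < n) (hj : j < n) :
    ∑ i ∈ Icc (j + 1) n, c i * s (a + (i - j - 1)) = if a = j then c n else 0 := by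
  rcases le_or_gt a j with haj | hja
  · rw [sum_eq_single_of_mem n (mem_Icc.mpr ⟨hj, le_rfl⟩)]
    · have htop : a + (n - j - 1) = n - 1 ↔ a = j := by omega
      simp only [hs _ (by omega : a + (n - j - 1) < n), htop, mul_ite, mul_one, mul_zero]
    · intro i hi hin
      rw [mem_Icc] at hi
      rw [hs _ (by omega), if_neg (by omega), mul_zero]
  · -- the relation at `m = a - j - 1` has vanishing low part and our sum as its high part
    have h := hrec (a - j - 1)
    rw [range_eq_Ico, ← sum_Ico_consecutive _ (Nat.zero_le (j + 1)) (by omega : j + 1 ≤ n + 1),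
      Ico_add_one_right_eq_Icc (j + 1) n, sum_eq_zero fun i hi => ?_, zero_add] at h
    · rw [if_neg (by omega), ← h]
      refine sum_congr rfl fun i hi => ?_
      rw [mem_Icc] at hi
      rw [show a + (i - j - 1) = a - j - 1 + i by omega]
    · rw [mem_Ico] at hi
      rw [hs _ (by omega), if_neg (by omega), mul_zero]

namespace Algebra

variable {R A : Type*} [CommRing R] [CommRing A] [Algebra R A]

def mulBilinForm (l : A →ₗ[R] R) (c : A) : LinearMap.BilinForm R A :=
  (LinearMap.mul R A).compr₂ (l ∘ₗ LinearMap.mulLeft R c)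

@[simp]
theorem mulBilinForm_apply (l : A →ₗ[R] R) (c x y : A) :
    mulBilinForm l c x y = l (c * (x * y)) := rfl

theorem isSymm_mulBilinForm (l : A →ₗ[R] R) (c : A) : (mulBilinForm l c).IsSymm :=
  ⟨fun x y => by simp [mul_comm]⟩

theorem toMatrix_mulBilinForm_mul_leftMulMatrix {ι : Type*} [Fintype ι] [DecidableEq ι]
    (b : Module.Basis ι R A) (l : A →ₗ[R] R) (c x : A) :
    LinearMap.BilinForm.toMatrix b (mulBilinForm l c) * leftMulMatrix b x =
      LinearMap.BilinForm.toMatrix b (mulBilinForm l (c * x)) := by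
  rw [leftMulMatrix_apply, ← LinearMap.BilinForm.toMatrix_compRight]
  congr 1
  ext y z
  simp [mul_left_comm, mul_assoc]

end Algebra

namespace AdjoinRoot

variable {k : Type*} [Field k] {f : k[X]} {n : ℕ}

noncomputable def rootPowBasis (hdeg : f.degree = n) : Module.Basis (Fin n) k (AdjoinRoot f) :=
  (powerBasis (f := f) (by rintro rfl; simp at hdeg)).basis.reindex
    (finCongr (natDegree_eq_of_degree_eq_some hdeg))

@[simp]
theorem rootPowBasis_apply (hdeg : f.degree = n) (i : Fin n) :
    rootPowBasis hdeg i = root f ^ (i : ℕ) := by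
  simp [rootPowBasis, finCongr]

theorem rootPowBasis_equivFun_symm (hdeg : f.degree = n) (v : Fin n → k) :
    (rootPowBasis hdeg).equivFun.symm v =
      ∑ i, algebraMap k (AdjoinRoot f) (v i) * root f ^ (i : ℕ) := by
  simp [Module.Basis.equivFun_symm_apply, Algebra.smul_def]

theorem rootPowBasis_repr_sum (hdeg : f.degree = n) (v : Fin n → k) :
    (rootPowBasis hdeg).repr (∑ i, algebraMap k (AdjoinRoot f) (v i) * root f ^ (i : ℕ)) =
      v := by
  rw [← rootPowBasis_equivFun_symm]
  exact (rootPowBasis hdeg).equivFun.apply_symm_apply v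

theorem eq_leftMulMatrix_root {Θ : Matrix (Fin n) (Fin n) k} (hdeg : f.degree = n)
    (hΘ : ∀ j : Fin n, root f ^ ((j : ℕ) + 1) =
      ∑ i, algebraMap k (AdjoinRoot f) (Θ i j) * root f ^ (i : ℕ)) :
    Θ = Algebra.leftMulMatrix (rootPowBasis hdeg) (root f) := by
  ext i j
  rw [Algebra.leftMulMatrix_eq_repr_mul, rootPowBasis_apply, ← pow_succ', hΘ,
    rootPowBasis_repr_sum]

/-- With `d = f'(θ)⁻¹` this is `z ↦ Tr(f_n z / f'(θ))`, the functional behind `𝐆`. -/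
noncomputable def twistedTrace (f : k[X]) (d : AdjoinRoot f) : AdjoinRoot f →ₗ[k] k :=
  Algebra.trace k (AdjoinRoot f) ∘ₗ (f.leadingCoeff • LinearMap.mulRight k d)

theorem twistedTrace_apply (d z : AdjoinRoot f) :
    twistedTrace f d z = Algebra.trace k (AdjoinRoot f) (f.leadingCoeff • (z * d)) := rfl

variable {d : AdjoinRoot f}

theorem twistedTrace_root_pow (hdeg : f.degree = n) (hsep : f.Separable)
    (hd : aeval (root f) (derivative f) * d = 1) {m : ℕ} (hm : m < n) :
    twistedTrace f d (root f ^ m) = if m = n - 1 then 1 else 0 := by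
  rw [twistedTrace_apply, map_smul, smul_eq_mul, ← natDegree_eq_of_degree_eq_some hdeg]
  exact leadingCoeff_mul_trace_root_pow_mul hsep hd (natDegree_eq_of_degree_eq_some hdeg ▸ hm)

theorem sum_coeff_mul_twistedTrace_mul_root_pow (hdeg : f.degree = n) (z : AdjoinRoot f) :
    ∑ i ∈ range (n + 1), f.coeff i * twistedTrace f d (z * root f ^ i) = 0 := by
  have hroot : ∑ i ∈ range (n + 1), f.coeff i • root f ^ i = 0 := by
    rw [← natDegree_eq_of_degree_eq_some hdeg, ← aeval_eq_sum_range, aeval_eq, mk_self]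
  calc ∑ i ∈ range (n + 1), f.coeff i * twistedTrace f d (z * root f ^ i)
      = twistedTrace f d (z * ∑ i ∈ range (n + 1), f.coeff i • root f ^ i) := by
        simp only [mul_sum, mul_smul_comm, map_sum, map_smul, smul_eq_mul]
    _ = 0 := by rw [hroot, mul_zero, map_zero]

/-- The dual basis of `1, θ, …, θ^{n-1}` for `(x, y) ↦ T(x y)` is
`f_n⁻¹ Σ_{i > j} f_i θ^{i-j-1}`, the coefficients of `f(X) / (X - θ)` divided by `f_n`. -/
theorem leadingCoeff_mul_rootPowBasis_repr (hdeg : f.degree = n) (hsep : f.Separable)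
    (hd : aeval (root f) (derivative f) * d = 1) (z : AdjoinRoot f) (j : Fin n) :
    f.leadingCoeff * (rootPowBasis hdeg).repr z j =
      ∑ i ∈ Icc ((j : ℕ) + 1) n, f.coeff i * twistedTrace f d (z * root f ^ (i - j - 1)) := by
  have hfun : f.leadingCoeff • (rootPowBasis hdeg).coord j =
      ∑ i ∈ Icc ((j : ℕ) + 1) n,
        f.coeff i • (twistedTrace f d ∘ₗ LinearMap.mulRight k (root f ^ (i - j - 1))) := by
    refine (rootPowBasis hdeg).ext fun a => ?_
    have h := sum_Icc_mul_shift_eq_ite f.coeff (fun m => twistedTrace f d (root f ^ m))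
      (fun m hm => twistedTrace_root_pow hdeg hsep hd hm)
      (fun m => by simpa only [pow_add] using sum_coeff_mul_twistedTrace_mul_root_pow hdeg _)
      a.2 j.2
    have hlc : f.coeff n = f.leadingCoeff := by
      rw [← natDegree_eq_of_degree_eq_some hdeg, coeff_natDegree]
    rw [LinearMap.smul_apply, Module.Basis.coord_apply, Module.Basis.repr_self,
      Finsupp.single_apply, LinearMap.sum_apply]
    simp only [LinearMap.smul_apply, LinearMap.comp_apply, LinearMap.mulRight_apply,
      rootPowBasis_apply, ← pow_add, smul_eq_mul, h, Fin.val_inj, hlc, mul_ite, mul_one, mul_zero]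
  simpa using LinearMap.congr_fun hfun z

theorem separatingLeft_mulBilinForm_twistedTrace (hdeg : f.degree = n) (hsep : f.Separable)
    (hd : aeval (root f) (derivative f) * d = 1) {c : AdjoinRoot f} (hc : IsUnit c) :
    (Algebra.mulBilinForm (twistedTrace f d) c).SeparatingLeft := by
  intro x hx
  have hlc : f.leadingCoeff ≠ 0 := leadingCoeff_ne_zero.mpr hsep.ne_zero
  refine hc.mul_right_eq_zero.mp ((rootPowBasis hdeg).ext_elem fun j => ?_)
  have h := leadingCoeff_mul_rootPowBasis_repr hdeg hsep hd (c * x) j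
  have hx' (y : AdjoinRoot f) : twistedTrace f d (c * x * y) = 0 := by
    simpa [mul_assoc] using hx y
  simp only [hx', mul_zero, sum_const_zero] at h
  rw [map_zero, Finsupp.zero_apply]
  exact (mul_eq_zero.mp h).resolve_left hlc

theorem isUnit_toMatrix_mulBilinForm_twistedTrace (hdeg : f.degree = n) (hsep : f.Separable)
    (hd : aeval (root f) (derivative f) * d = 1) {c : AdjoinRoot f} (hc : IsUnit c) :
    IsUnit (LinearMap.BilinForm.toMatrix (rootPowBasis hdeg)
      (Algebra.mulBilinForm (twistedTrace f d) c)) := by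
  have : Module.Finite k (AdjoinRoot f) := .of_basis (rootPowBasis hdeg)
  rw [isUnit_iff_isUnit_det, isUnit_iff_ne_zero,
    ← LinearMap.BilinForm.nondegenerate_iff_det_ne_zero]
  exact .ofSeparatingLeft (separatingLeft_mulBilinForm_twistedTrace hdeg hsep hd hc)

end AdjoinRoot

/-- Proposition 2.5(i): the quadratic forms `Q_j` defined by
`ξ(u₀ + u₁θ + … + u_{n-1}θ^{n-1})² = Σ Q_j θ^j` are given by the stated
matrix formula, where `𝐆` is the twisted trace-form matrix and `𝐇 = 𝐆Θ`. -/
theorem stmt_0 (k : Type*) [Field k] (n : ℕ) (f : k[X])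
    (hdeg : f.degree = n) (hsep : f.Separable)
    (ξ : (AdjoinRoot f)ˣ) (d : AdjoinRoot f)
    (hd : aeval (AdjoinRoot.root f) (derivative f) * d = 1)
    (Q : Fin n → (Fin n → k) → k)
    (hQ : ∀ u : Fin n → k,
      (ξ : AdjoinRoot f) *
          (∑ i : Fin n, algebraMap k (AdjoinRoot f) (u i) * AdjoinRoot.root f ^ (i : ℕ)) ^ 2
        = ∑ j : Fin n, algebraMap k (AdjoinRoot f) (Q j u) * AdjoinRoot.root f ^ (j : ℕ))
    (G : Matrix (Fin n) (Fin n) k)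
    (hG : ∀ i j : Fin n, G i j =
      Algebra.trace k (AdjoinRoot f)
        (f.leadingCoeff • ((ξ : AdjoinRoot f) * AdjoinRoot.root f ^ ((i : ℕ) + (j : ℕ)) * d)))
    (Θ : Matrix (Fin n) (Fin n) k)
    (hΘ : ∀ j : Fin n, AdjoinRoot.root f ^ ((j : ℕ) + 1)
        = ∑ i : Fin n, algebraMap k (AdjoinRoot f) (Θ i j) * AdjoinRoot.root f ^ (i : ℕ))
    (H : Matrix (Fin n) (Fin n) k) (hH : H = G * Θ) :
    G.IsSymm ∧ H.IsSymm ∧ IsUnit G ∧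
      ∀ (j : Fin n) (u : Fin n → k),
        Q j u = f.leadingCoeff⁻¹ *
          ∑ i ∈ Finset.Icc ((j : ℕ) + 1) n,
            f.coeff i * (u ⬝ᵥ ((G * (G⁻¹ * H) ^ (i - (j : ℕ) - 1)) *ᵥ u)) := by
  set b := AdjoinRoot.rootPowBasis hdeg
  have hGB : G =
      LinearMap.BilinForm.toMatrix b (Algebra.mulBilinForm (AdjoinRoot.twistedTrace f d) ξ) := by
    ext i j
    simp [hG, b, AdjoinRoot.twistedTrace_apply, pow_add, mul_assoc]
  have hGΘ (p : ℕ) : G * Θ ^ p = LinearMap.BilinForm.toMatrix b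
      (Algebra.mulBilinForm (AdjoinRoot.twistedTrace f d) (ξ * AdjoinRoot.root f ^ p)) := by
    rw [AdjoinRoot.eq_leftMulMatrix_root hdeg hΘ, ← map_pow, hGB,
      Algebra.toMatrix_mulBilinForm_mul_leftMulMatrix]
  have hGu : IsUnit G :=
    hGB ▸ AdjoinRoot.isUnit_toMatrix_mulBilinForm_twistedTrace hdeg hsep hd ξ.isUnit
  have hGinvH : G⁻¹ * H = Θ := by
    rw [hH, nonsing_inv_mul_cancel_left G Θ ((isUnit_iff_isUnit_det G).mp hGu)]
  have hsymm (p : ℕ) : (G * Θ ^ p).IsSymm := by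
    rw [hGΘ, LinearMap.BilinForm.isSymm_toMatrix_iff_isSymm]
    exact Algebra.isSymm_mulBilinForm _ _
  refine ⟨by simpa using hsymm 0, by simpa [hH] using hsymm 1, hGu, fun j u => ?_⟩
  have hQ' : Q j u = b.repr (ξ * b.equivFun.symm u ^ 2) j := by
    rw [AdjoinRoot.rootPowBasis_equivFun_symm, hQ u, AdjoinRoot.rootPowBasis_repr_sum]
  rw [hQ', eq_inv_mul_iff_mul_eq₀ (leadingCoeff_ne_zero.mpr hsep.ne_zero),
    AdjoinRoot.leadingCoeff_mul_rootPowBasis_repr hdeg hsep hd, hGinvH]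
  refine sum_congr rfl fun i _ => ?_
  rw [hGΘ, LinearMap.BilinForm.dotProduct_toMatrix_mulVec, Algebra.mulBilinForm_apply]
  ring_nf
end

section
/- Let k be a field, let f(x) = f_n x^n + … + f_1 x + f_0 ∈ k[x] be a separable polynomial of degree n with f_n ≠ 0, let L = k[x]/(f) = k[θ], and fix a unit ξ ∈ L^×. Let 𝐆 be the n×n matrix with (i,j) entry Tr_{L/k}(f_n ξ θ^{i+j}/f'(θ)) (indices 0 ≤ i,j ≤ n−1) and 𝐇 = 𝐆Θ where Θ is the matrix of multiplication by θ in the power basis. If 𝐯 = 𝐆^{−1}(1, θ, …, θ^{n−1})^T ∈ L^n, then (θ𝐆 − 𝐇)𝐯 = 0 and 𝐯^T 𝐆 𝐯 = f'(θ)/(f_n ξ). -/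
open Polynomial Matrix

/-!
Euler's lemma for the trace: write `f / f_n = (X - θ) q(X)` over `L`. Then every `y ∈ L`
satisfies `y f'(θ) / f_n = ∑ⱼ Tr(y θ^j) q_j`. To see this, pass to `T = L[X]/(f)`, which is
`L ⊗_k L` with `θ ⊗ 1 ↦ θ` and `1 ⊗ θ ↦ X`. The element `e = q(X)` is killed by `X - θ`, so
`e z = ε(z) e` where `ε` evaluates at `θ`, and hence `Tr_{T/L}(z e) = ε(z e)`.

Twisting by the unit `f_n ξ / f'(θ)` shows that `w = ξ⁻¹ q` is dual to the powers of `θ` for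
the form defining `𝐆`. Therefore `𝐆 w = (θ^i)_i` and `𝐇 w = (θ^{i+1})_i`, and `𝐆` is
invertible, so `𝐯 = w`. Finally `𝐯ᵀ𝐆𝐯 = ξ⁻¹ q(θ) = ξ⁻¹ f'(θ) / f_n`.
-/

namespace Algebra

theorem trace_algHom_eq_of_basis {ι R S T : Type*} [Fintype ι] [CommRing R] [CommRing S]
    [CommRing T] [Algebra R S] [Algebra S T] [Algebra R T] [IsScalarTower R S T]
    (b : Module.Basis ι R S) (c : Module.Basis ι S T) (σ : S →ₐ[R] T)
    (hσ : ∀ i, σ (b i) = c i) (w : S) : trace S T (σ w) = algebraMap R S (trace R S w) := by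
  classical
  have hrepr (y : S) : c.repr (σ y) = fun i ↦ algebraMap R S (b.repr y i) := by
    have : σ y = ∑ i, algebraMap R S (b.repr y i) • c i := by
      conv_lhs => rw [← b.sum_repr y]
      simp only [map_sum, map_smul, hσ, algebraMap_smul]
    rw [this, c.repr_sum_self]
  simp only [trace_eq_matrix_trace c, trace_eq_matrix_trace b, Matrix.trace, Matrix.diag,
    leftMulMatrix_eq_repr_mul, map_sum, ← hσ, ← map_mul, hrepr]

theorem trace_eq_of_mul_eq_smul {S T : Type*} [CommRing S] [CommRing T] [Algebra S T]
    [Module.Free S T] [Module.Finite S T] (ε : T →ₐ[S] S) {e : T}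
    (he : ∀ a, e * a = ε a • e) : trace S T e = ε e :=
  calc trace S T e = LinearMap.trace S T (ε.toLinearMap.smulRight e) := by
        rw [trace_apply]
        congr 1
        ext a
        exact he a
    _ = ε e := LinearMap.trace_smulRight _ _

end Algebra

theorem Polynomial.mul_aeval_eq_eval_smul {S A : Type*} [CommRing S] [CommRing A] [Algebra S A]
    {z : A} {r : S} {e : A} (he : e * (z - algebraMap S A r) = 0) (h : S[X]) :
    e * aeval z h = h.eval r • e := by
  obtain ⟨q, hq⟩ := X_sub_C_dvd_sub_C_eval (p := h) (a := r)
  have := congrArg (aeval z) hq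
  rw [map_sub, aeval_C, map_mul, map_sub, aeval_X, aeval_C, sub_eq_iff_eq_add] at this
  rw [this, mul_add, ← mul_assoc, he, zero_mul, zero_add, Algebra.smul_def, mul_comm]

namespace PowerBasis

variable {R S : Type*} [CommRing R] [CommRing S] [Algebra R S]

theorem aeval_minpolyDiv_eq_sum (pb : PowerBasis R S) {A : Type*} [Semiring A] [Algebra S A]
    (z : A) :
    aeval z (minpolyDiv R pb.gen) =
      ∑ i : Fin pb.dim, (minpolyDiv R pb.gen).coeff i • z ^ (i : ℕ) := by
  nontriviality A
  have : Nontrivial S := (algebraMap S A).domain_nontrivial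
  have : Nontrivial R := (algebraMap R S).domain_nontrivial
  rw [aeval_eq_sum_range' (pb.natDegree_minpoly ▸ natDegree_minpolyDiv_lt pb.isIntegral_gen),
    Fin.sum_univ_eq_sum_range (fun i ↦ (minpolyDiv R pb.gen).coeff i • z ^ i)]

theorem sum_algebraMap_trace_mul_pow_mul_coeff_minpolyDiv (pb : PowerBasis R S) (u : S) :
    ∑ i : Fin pb.dim, algebraMap R S (Algebra.trace R S (u * pb.gen ^ (i : ℕ))) *
        (minpolyDiv R pb.gen).coeff i =
      u * aeval pb.gen (derivative (minpoly R pb.gen)) := by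
  nontriviality S
  have : Nontrivial R := (algebraMap R S).domain_nontrivial
  set p := (minpoly R pb.gen).map (algebraMap R S)
  have hp : p.Monic := (minpoly.monic pb.isIntegral_gen).map _
  have := hp.free_adjoinRoot
  have := hp.finite_adjoinRoot
  let T := AdjoinRoot p
  let σ : S →ₐ[R] T := pb.lift (AdjoinRoot.root p) <| by
    rw [← aeval_map_algebraMap S, AdjoinRoot.aeval_eq, AdjoinRoot.mk_self]
  let ε : T →ₐ[S] S := AdjoinRoot.liftAlgHom p (Algebra.ofId S S) pb.gen <| by
    rw [Algebra.toRingHom_ofId, ← aeval_def, aeval_map_algebraMap, minpoly.aeval]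
  have hεσ (y : S) : ε (σ y) = y := by
    have : (ε.restrictScalars R).comp σ = AlgHom.id R S :=
      pb.algHom_ext <| by
        change ε (σ pb.gen) = pb.gen
        rw [pb.lift_gen, AdjoinRoot.liftAlgHom_root]
    exact DFunLike.congr_fun this y
  have hdim : p.natDegree = pb.dim :=
    ((minpoly.monic pb.isIntegral_gen).natDegree_map _).trans pb.natDegree_minpoly
  let c : Module.Basis (Fin pb.dim) S T := (AdjoinRoot.powerBasis' hp).basis.reindex (finCongr hdim)
  have hc (i : Fin pb.dim) : σ (pb.basis i) = c i := by
    simp [c, σ, pb.basis_eq_pow, pb.lift_gen]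
    rfl
  let e : T := aeval (AdjoinRoot.root p) (minpolyDiv R pb.gen)
  have he (a : T) : e * a = ε a • e := by
    have he₀ : e * (AdjoinRoot.root p - algebraMap S T pb.gen) = 0 := by
      have := congrArg (aeval (AdjoinRoot.root p)) (minpolyDiv_spec R pb.gen)
      rw [map_mul, map_sub, aeval_X, aeval_C] at this
      rw [this, AdjoinRoot.aeval_eq, AdjoinRoot.mk_self]
    obtain ⟨h, rfl⟩ := AdjoinRoot.mk_surjective a
    rw [← AdjoinRoot.aeval_eq, mul_aeval_eq_eval_smul he₀, ← aeval_algHom_apply,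
      AdjoinRoot.liftAlgHom_root, coe_aeval_eq_eval]
  calc ∑ i : Fin pb.dim, algebraMap R S (Algebra.trace R S (u * pb.gen ^ (i : ℕ))) *
        (minpolyDiv R pb.gen).coeff i
      = ∑ i : Fin pb.dim, Algebra.trace S T
          ((minpolyDiv R pb.gen).coeff i • (σ u * AdjoinRoot.root p ^ (i : ℕ))) := by
        refine Finset.sum_congr rfl fun i _ ↦ ?_
        rw [← Algebra.trace_algHom_eq_of_basis pb.basis c σ hc, map_smul, smul_eq_mul, mul_comm,
          map_mul, map_pow, pb.lift_gen]
    _ = Algebra.trace S T (σ u * e) := by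
        change _ = Algebra.trace S T (σ u * aeval _ _)
        rw [pb.aeval_minpolyDiv_eq_sum, Finset.mul_sum, map_sum]
        simp only [mul_smul_comm]
    _ = ε (σ u * e) := Algebra.trace_eq_of_mul_eq_smul ε fun a ↦ by
        rw [mul_assoc, he, mul_smul_comm]
    _ = u * aeval pb.gen (derivative (minpoly R pb.gen)) := by
        rw [map_mul, hεσ, ← aeval_algHom_apply, AdjoinRoot.liftAlgHom_root, coe_aeval_eq_eval,
          eval_minpolyDiv_self]

end PowerBasis

/-- `w` is dual to the powers of `x` for the pairing `(a, b) ↦ t (a * b)`. -/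
def IsDualToPowers {K L : Type*} [CommRing K] [CommRing L] [Algebra K L] {n : ℕ}
    (t : L →ₗ[K] K) (x : L) (w : Fin n → L) : Prop :=
  ∀ y, ∑ j : Fin n, algebraMap K L (t (y * x ^ (j : ℕ))) * w j = y

namespace IsDualToPowers

variable {K L : Type*} [CommRing L] {n : ℕ} {x : L} {w : Fin n → L}

theorem map_mulVec [CommRing K] [Algebra K L] {t : L →ₗ[K] K} (hw : IsDualToPowers t x w)
    (y : Fin n → L) :
    (Matrix.of fun i j : Fin n ↦ t (y i * x ^ (j : ℕ))).map (algebraMap K L) *ᵥ w = y :=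
  funext fun i ↦ hw (y i)

theorem isUnit_of_linearIndependent [Field K] [Algebra K L] {t : L →ₗ[K] K}
    (hw : IsDualToPowers t x w) (hx : LinearIndependent K fun j : Fin n ↦ x ^ (j : ℕ)) :
    IsUnit (Matrix.of fun i j : Fin n ↦ t (x ^ (i : ℕ) * x ^ (j : ℕ))) := by
  rw [← Matrix.mulVec_injective_iff_isUnit, ← Matrix.coe_mulVecLin, injective_iff_map_eq_zero]
  intro a ha
  have hy : ∑ j, a j • x ^ (j : ℕ) = 0 := by
    rw [← hw (∑ j, a j • x ^ (j : ℕ))]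
    refine Finset.sum_eq_zero fun i _ ↦ ?_
    have := congrFun ha i
    simp only [Matrix.coe_mulVecLin, Matrix.mulVec, dotProduct, Matrix.of_apply] at this
    simp only [Finset.sum_mul, smul_mul_assoc, map_sum, map_smul, smul_eq_mul, mul_comm (a _),
      mul_comm (x ^ (_ : ℕ)) (x ^ (i : ℕ)), this, Pi.zero_apply, map_zero, zero_mul]
  exact funext (Fintype.linearIndependent_iff.mp hx a hy)

end IsDualToPowers

theorem Matrix.of_mul_eq_of_pow_succ {K L : Type*} [CommRing K] [CommRing L] [Algebra K L]
    {n : ℕ} (t : L →ₗ[K] K) {x : L} {Θ : Matrix (Fin n) (Fin n) K}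
    (hΘ : ∀ j : Fin n, x ^ ((j : ℕ) + 1) = ∑ i, algebraMap K L (Θ i j) * x ^ (i : ℕ))
    (y : Fin n → L) :
    (Matrix.of fun i j : Fin n ↦ t (y i * x ^ (j : ℕ))) * Θ =
      Matrix.of fun i j : Fin n ↦ t ((y i * x) * x ^ (j : ℕ)) := by
  ext i j
  rw [Matrix.mul_apply, Matrix.of_apply, mul_assoc, ← pow_succ', hΘ j, Finset.mul_sum, map_sum]
  refine Finset.sum_congr rfl fun m _ ↦ ?_
  rw [Matrix.of_apply, mul_left_comm, ← Algebra.smul_def, map_smul, smul_eq_mul, mul_comm]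

namespace AdjoinRoot

variable {k : Type*} [Field k] {f : k[X]}

theorem aeval_derivative_minpoly_root (hf : f ≠ 0) :
    aeval (root f) (derivative (minpoly k (root f))) =
      f.leadingCoeff⁻¹ • aeval (root f) (derivative f) := by
  rw [minpoly_root hf, derivative_mul, derivative_C, mul_zero, add_zero, map_mul, aeval_C,
    Algebra.smul_def, mul_comm]

theorem sum_coeff_minpolyDiv_mul_root_pow (hf : f ≠ 0) :
    ∑ j : Fin f.natDegree, (minpolyDiv k (root f)).coeff j * root f ^ (j : ℕ) =
      f.leadingCoeff⁻¹ • aeval (root f) (derivative f) := by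
  rw [← aeval_derivative_minpoly_root hf, ← eval_minpolyDiv_self, ← coe_aeval_eq_eval]
  exact ((powerBasis hf).aeval_minpolyDiv_eq_sum (root f)).symm

theorem isDualToPowers_traceForm (hf : f ≠ 0) {d : AdjoinRoot f}
    (hd : aeval (root f) (derivative f) * d = 1) (a : (AdjoinRoot f)ˣ) :
    IsDualToPowers (Algebra.traceForm k (AdjoinRoot f) (f.leadingCoeff • (a * d))) (root f)
      (n := f.natDegree) fun j ↦ ↑a⁻¹ * (minpolyDiv k (root f)).coeff j := by
  intro y
  have key := (powerBasis hf).sum_algebraMap_trace_mul_pow_mul_coeff_minpolyDiv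
    (f.leadingCoeff • (a * d) * y)
  rw [powerBasis_gen, aeval_derivative_minpoly_root hf] at key
  simp only [Algebra.traceForm_apply, ← mul_assoc, mul_right_comm _ (↑a⁻¹ : AdjoinRoot f) _]
  rw [← Finset.sum_mul]
  refine (congrArg (· * (↑a⁻¹ : AdjoinRoot f)) key).trans ?_
  calc _ = (↑a⁻¹ * ↑a) * y * (aeval (root f) (derivative f) * d) *
          algebraMap k (AdjoinRoot f) (f.leadingCoeff * f.leadingCoeff⁻¹) := by
        simp only [Algebra.smul_def, map_mul]
        ring
    _ = y := by
        rw [hd, Units.inv_mul, mul_inv_cancel₀ (leadingCoeff_ne_zero.mpr hf), map_one, one_mul,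
          mul_one, mul_one]

end AdjoinRoot

theorem stmt_2_general (k : Type*) [Field k] (n : ℕ) (f : k[X])
    (hdeg : f.degree = n)
    (ξ : (AdjoinRoot f)ˣ) (d : AdjoinRoot f)
    (hd : aeval (AdjoinRoot.root f) (derivative f) * d = 1)
    (G : Matrix (Fin n) (Fin n) k)
    (hG : ∀ i j : Fin n, G i j =
      Algebra.trace k (AdjoinRoot f)
        (f.leadingCoeff • ((ξ : AdjoinRoot f) * AdjoinRoot.root f ^ ((i : ℕ) + (j : ℕ)) * d)))
    (Θ : Matrix (Fin n) (Fin n) k)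
    (hΘ : ∀ j : Fin n, AdjoinRoot.root f ^ ((j : ℕ) + 1)
        = ∑ i : Fin n, algebraMap k (AdjoinRoot f) (Θ i j) * AdjoinRoot.root f ^ (i : ℕ))
    (H : Matrix (Fin n) (Fin n) k) (hH : H = G * Θ)
    (v : Fin n → AdjoinRoot f)
    (hv : v = (G.map (algebraMap k (AdjoinRoot f)))⁻¹ *ᵥ
      (fun i : Fin n => AdjoinRoot.root f ^ (i : ℕ))) :
    (AdjoinRoot.root f • G.map (algebraMap k (AdjoinRoot f))
        - H.map (algebraMap k (AdjoinRoot f))) *ᵥ v = 0 ∧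
    v ⬝ᵥ (G.map (algebraMap k (AdjoinRoot f)) *ᵥ v)
      = f.leadingCoeff⁻¹ •
          (aeval (AdjoinRoot.root f) (derivative f) * ((ξ⁻¹ : (AdjoinRoot f)ˣ) : AdjoinRoot f)) := by
  obtain rfl : f.natDegree = n := natDegree_eq_of_degree_eq_some hdeg
  have hf : f ≠ 0 := by rintro rfl; simp at hdeg
  have hqθ := AdjoinRoot.sum_coeff_minpolyDiv_mul_root_pow hf
  set θ := AdjoinRoot.root f
  set t := Algebra.traceForm k (AdjoinRoot f) (f.leadingCoeff • (ξ * d))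
  set w : Fin f.natDegree → AdjoinRoot f := fun j ↦ ↑ξ⁻¹ * (minpolyDiv k θ).coeff j
  have hw : IsDualToPowers t θ w := AdjoinRoot.isDualToPowers_traceForm hf hd ξ
  have hGt : G = Matrix.of fun i j : Fin f.natDegree ↦ t (θ ^ (i : ℕ) * θ ^ (j : ℕ)) := by
    ext i j
    rw [hG, Matrix.of_apply, Algebra.traceForm_apply, pow_add, smul_mul_assoc]
    ring_nf
  have hGw : G.map (algebraMap k _) *ᵥ w = fun i : Fin f.natDegree ↦ θ ^ (i : ℕ) :=
    hGt ▸ hw.map_mulVec _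
  have hHw : H.map (algebraMap k _) *ᵥ w = fun i : Fin f.natDegree ↦ θ ^ (i : ℕ) * θ := by
    rw [hH, hGt, Matrix.of_mul_eq_of_pow_succ t hΘ]
    exact hw.map_mulVec _
  have hGunit : IsUnit (G.map (algebraMap k (AdjoinRoot f))).det := by
    have hx := (AdjoinRoot.powerBasis hf).basis.linearIndependent
    rw [PowerBasis.coe_basis] at hx
    exact (Matrix.isUnit_iff_isUnit_det _).mp
      ((hGt ▸ hw.isUnit_of_linearIndependent hx).map (algebraMap k (AdjoinRoot f)).mapMatrix)
  obtain rfl : v = w := by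
    rw [hv, ← hGw, Matrix.mulVec_mulVec, Matrix.nonsing_inv_mul _ hGunit, Matrix.one_mulVec]
  refine ⟨?_, ?_⟩
  · rw [Matrix.sub_mulVec, Matrix.smul_mulVec, hGw, hHw]
    ext i
    simp [mul_comm]
  · rw [hGw]
    simp only [dotProduct, w, mul_assoc, ← Finset.mul_sum, hqθ]
    rw [mul_smul_comm, mul_comm]

/-- Proposition 2.5(iii): if `𝐯 = 𝐆⁻¹(1, θ, …, θ^{n−1})ᵀ` then `(θ𝐆 − 𝐇)𝐯 = 0`
and `𝐯ᵀ𝐆𝐯 = f'(θ)/(f_n ξ)`. -/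
theorem stmt_2 (k : Type*) [Field k] (n : ℕ) (f : k[X])
    (hdeg : f.degree = n) (hsep : f.Separable)
    (ξ : (AdjoinRoot f)ˣ) (d : AdjoinRoot f)
    (hd : aeval (AdjoinRoot.root f) (derivative f) * d = 1)
    (G : Matrix (Fin n) (Fin n) k)
    (hG : ∀ i j : Fin n, G i j =
      Algebra.trace k (AdjoinRoot f)
        (f.leadingCoeff • ((ξ : AdjoinRoot f) * AdjoinRoot.root f ^ ((i : ℕ) + (j : ℕ)) * d)))
    (Θ : Matrix (Fin n) (Fin n) k)
    (hΘ : ∀ j : Fin n, AdjoinRoot.root f ^ ((j : ℕ) + 1)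
        = ∑ i : Fin n, algebraMap k (AdjoinRoot f) (Θ i j) * AdjoinRoot.root f ^ (i : ℕ))
    (H : Matrix (Fin n) (Fin n) k) (hH : H = G * Θ)
    (v : Fin n → AdjoinRoot f)
    (hv : v = (G.map (algebraMap k (AdjoinRoot f)))⁻¹ *ᵥ
      (fun i : Fin n => AdjoinRoot.root f ^ (i : ℕ))) :
    (AdjoinRoot.root f • G.map (algebraMap k (AdjoinRoot f))
        - H.map (algebraMap k (AdjoinRoot f))) *ᵥ v = 0 ∧
    v ⬝ᵥ (G.map (algebraMap k (AdjoinRoot f)) *ᵥ v)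
      = f.leadingCoeff⁻¹ •
          (aeval (AdjoinRoot.root f) (derivative f) * ((ξ⁻¹ : (AdjoinRoot f)ˣ) : AdjoinRoot f)) :=
  stmt_2_general k n f hdeg ξ d hd G hG Θ hΘ H hH v hv
end

section
/- Let R be a commutative ring, let f_0, …, f_6 ∈ R, and let θ ∈ R. Then Pf(A(θ)) = 6f₆θ⁵ + 5f₅θ⁴ + 4f₄θ³ + 3f₃θ² + 2f₂θ + f₁ (the formal derivative f'(θ)), and consequently A(θ)·A(θ)* = A(θ)*·A(θ) = f'(θ)·I₄. -/
open Matrix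

/-- For a `4×4` skew-symmetric matrix `A = (A_{ij})`, the matrix `A*`. -/
def starMat {R : Type*} [CommRing R] (A : Matrix (Fin 4) (Fin 4) R) :
    Matrix (Fin 4) (Fin 4) R :=
  !![0, A 3 2, A 1 3, A 2 1;
     A 2 3, 0, A 3 0, A 0 2;
     A 3 1, A 0 3, 0, A 1 0;
     A 1 2, A 2 0, A 0 1, 0]

/-- The Pfaffian `Pf(A) = A₁₂A₃₄ − A₁₃A₂₄ + A₁₄A₂₃` of a `4×4` skew-symmetric matrix. -/
def pf4 {R : Type*} [CommRing R] (A : Matrix (Fin 4) (Fin 4) R) : R :=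
  A 0 1 * A 2 3 - A 0 2 * A 1 3 + A 0 3 * A 1 2

/-- The skew-symmetric matrix `A(θ)` of (2.9), built from
`h₃(θ), h₄(θ), h₅(θ)` for `f = f₆x⁶+⋯+f₀`. -/
def Amat {R : Type*} [CommRing R] (f1 f2 f3 f4 f5 f6 θ : R) :
    Matrix (Fin 4) (Fin 4) R :=
  let h3 := 2 * f6 * θ ^ 3 + f5 * θ ^ 2
  let h4 := 2 * f6 * θ ^ 4 + 2 * f5 * θ ^ 3 + 2 * f4 * θ ^ 2 + f3 * θ
  let h5 := 2 * f6 * θ ^ 5 + 2 * f5 * θ ^ 4 + 2 * f4 * θ ^ 3 + 2 * f3 * θ ^ 2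
      + 2 * f2 * θ + f1
  !![0, h5, h4, θ ^ 2;
     -h5, 0, h3, -θ;
     -h4, -h3, 0, 1;
     -θ ^ 2, θ, -1, 0]

/-!
`A(θ)` is alternating, and every alternating `4×4` matrix `A` satisfies
`A A* = A* A = Pf(A) I` by direct expansion. The Pfaffian of `A(θ)` is
`h₅ · 1 + h₄ θ + θ² h₃`, and collecting powers of `θ` gives `f'(θ)`.
-/

section

variable {R : Type*} [CommRing R]

def skew4 (a b c d e f : R) : Matrix (Fin 4) (Fin 4) R :=
  !![0, a, b, c; -a, 0, d, e; -b, -d, 0, f; -c, -e, -f, 0]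

theorem pf4_skew4 (a b c d e f : R) : pf4 (skew4 a b c d e f) = a * f - b * e + c * d := rfl

/-- The adjugate of an alternating `4×4` matrix `A` is `Pf(A) • A*`, and `det A = Pf(A)²`. -/
theorem skew4_mul_starMat (a b c d e f : R) :
    skew4 a b c d e f * starMat (skew4 a b c d e f) = pf4 (skew4 a b c d e f) • 1 := by
  ext i j
  fin_cases i <;> fin_cases j <;>
    simp [skew4, starMat, pf4, Matrix.mul_apply, Fin.sum_univ_four] <;> ring

theorem starMat_skew4_mul (a b c d e f : R) :
    starMat (skew4 a b c d e f) * skew4 a b c d e f = pf4 (skew4 a b c d e f) • 1 := by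
  ext i j
  fin_cases i <;> fin_cases j <;>
    simp [skew4, starMat, pf4, Matrix.mul_apply, Fin.sum_univ_four] <;> ring

theorem Amat_eq_skew4 (f1 f2 f3 f4 f5 f6 θ : R) :
    Amat f1 f2 f3 f4 f5 f6 θ =
      skew4 (2 * f6 * θ ^ 5 + 2 * f5 * θ ^ 4 + 2 * f4 * θ ^ 3 + 2 * f3 * θ ^ 2 + 2 * f2 * θ + f1)
        (2 * f6 * θ ^ 4 + 2 * f5 * θ ^ 3 + 2 * f4 * θ ^ 2 + f3 * θ) (θ ^ 2)
        (2 * f6 * θ ^ 3 + f5 * θ ^ 2) (-θ) 1 := by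
  rw [Amat, skew4, neg_neg]

end

theorem stmt_4_general (R : Type*) [CommRing R] (f1 f2 f3 f4 f5 f6 θ : R) :
    pf4 (Amat f1 f2 f3 f4 f5 f6 θ)
      = 6 * f6 * θ ^ 5 + 5 * f5 * θ ^ 4 + 4 * f4 * θ ^ 3 + 3 * f3 * θ ^ 2
        + 2 * f2 * θ + f1 ∧
    Amat f1 f2 f3 f4 f5 f6 θ * starMat (Amat f1 f2 f3 f4 f5 f6 θ)
      = (6 * f6 * θ ^ 5 + 5 * f5 * θ ^ 4 + 4 * f4 * θ ^ 3 + 3 * f3 * θ ^ 2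
          + 2 * f2 * θ + f1) • (1 : Matrix (Fin 4) (Fin 4) R) ∧
    starMat (Amat f1 f2 f3 f4 f5 f6 θ) * Amat f1 f2 f3 f4 f5 f6 θ
      = (6 * f6 * θ ^ 5 + 5 * f5 * θ ^ 4 + 4 * f4 * θ ^ 3 + 3 * f3 * θ ^ 2
          + 2 * f2 * θ + f1) • (1 : Matrix (Fin 4) (Fin 4) R) := by
  have hpf : pf4 (Amat f1 f2 f3 f4 f5 f6 θ)
      = 6 * f6 * θ ^ 5 + 5 * f5 * θ ^ 4 + 4 * f4 * θ ^ 3 + 3 * f3 * θ ^ 2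
        + 2 * f2 * θ + f1 := by
    rw [Amat_eq_skew4, pf4_skew4]
    ring
  rw [← hpf, Amat_eq_skew4]
  exact ⟨rfl, skew4_mul_starMat .., starMat_skew4_mul ..⟩

/-- Equation (2.12): `Pf(A(θ)) = f'(θ)`, and hence
`A(θ)A(θ)* = A(θ)*A(θ) = f'(θ)·I₄`. -/
theorem stmt_4 (R : Type*) [CommRing R] (f0 f1 f2 f3 f4 f5 f6 θ : R) :
    pf4 (Amat f1 f2 f3 f4 f5 f6 θ)
      = 6 * f6 * θ ^ 5 + 5 * f5 * θ ^ 4 + 4 * f4 * θ ^ 3 + 3 * f3 * θ ^ 2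
        + 2 * f2 * θ + f1 ∧
    Amat f1 f2 f3 f4 f5 f6 θ * starMat (Amat f1 f2 f3 f4 f5 f6 θ)
      = (6 * f6 * θ ^ 5 + 5 * f5 * θ ^ 4 + 4 * f4 * θ ^ 3 + 3 * f3 * θ ^ 2
          + 2 * f2 * θ + f1) • (1 : Matrix (Fin 4) (Fin 4) R) ∧
    starMat (Amat f1 f2 f3 f4 f5 f6 θ) * Amat f1 f2 f3 f4 f5 f6 θ
      = (6 * f6 * θ ^ 5 + 5 * f5 * θ ^ 4 + 4 * f4 * θ ^ 3 + 3 * f3 * θ ^ 2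
          + 2 * f2 * θ + f1) • (1 : Matrix (Fin 4) (Fin 4) R) :=
  stmt_4_general R f1 f2 f3 f4 f5 f6 θ
end

section
/- Let R be a commutative ring, let f₆, θ₁, …, θ₆ ∈ R, and let f₀, …, f₅ ∈ R be the coefficients determined by f₆·∏_{i=1}^{6}(x−θᵢ) = f₆x⁶+f₅x⁵+f₄x⁴+f₃x³+f₂x²+f₁x+f₀. Write Aᵢ = A(θᵢ). Then for all i ≠ j one has Aᵢ* Aⱼ = − Aⱼ* Aᵢ. -/
/-!
On alternating `4×4` matrices, `A ↦ A*` is the polarization of `A* A = Pf(A) • 1`, so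
`Aᵢ* Aⱼ + Aⱼ* Aᵢ` is the polarized Pfaffian of `Aᵢ, Aⱼ` times the identity. For the matrices
`A(θ)` the polarized Pfaffian of `A(a), A(b)` is twice the divided difference `f[a, b]`
(in particular `Pf A(θ) = f'(θ)`). At two roots `θᵢ, θⱼ` of `f = f₆ ∏ (x - θₖ)` this divided
difference vanishes: dividing `f` by `x - θᵢ` leaves `f₆ ∏_{k ≠ i} (x - θₖ)`, which has the root
`θⱼ`; the monic `x - θᵢ` cancels over any commutative ring, even when `θᵢ = θⱼ`.
-/

open Matrix Polynomial

open Finset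

section

variable {R : Type*} [CommRing R]

/-- The polarization of the Pfaffian `Pf A = A₀₁A₂₃ - A₀₂A₁₃ + A₀₃A₁₂` of a `4×4` matrix. -/
def pfaffPolar (A B : Matrix (Fin 4) (Fin 4) R) : R :=
  A 0 1 * B 2 3 + B 0 1 * A 2 3 - A 0 2 * B 1 3 - B 0 2 * A 1 3 + A 0 3 * B 1 2 + B 0 3 * A 1 2

def IsAlternating {n : Type*} (A : Matrix n n R) : Prop :=
  (∀ i j, A j i = -A i j) ∧ ∀ i, A i i = 0

theorem starMat_mul_add_starMat_mul {A B : Matrix (Fin 4) (Fin 4) R}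
    (hA : IsAlternating A) (hB : IsAlternating B) :
    starMat A * B + starMat B * A = pfaffPolar A B • 1 := by
  obtain ⟨hA, hA₀⟩ := hA
  obtain ⟨hB, hB₀⟩ := hB
  ext i j
  simp only [Matrix.add_apply, mul_apply, Fin.sum_univ_four, Matrix.smul_apply, one_apply]
  fin_cases i <;> fin_cases j <;>
    simp [starMat, pfaffPolar, hA₀, hB₀,
      hA 0 1, hA 0 2, hA 0 3, hA 1 2, hA 1 3, hA 2 3,
      hB 0 1, hB 0 2, hB 0 3, hB 1 2, hB 1 3, hB 2 3] <;> ring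

noncomputable def sextic (f0 f1 f2 f3 f4 f5 f6 : R) : R[X] :=
  C f6 * X ^ 6 + C f5 * X ^ 5 + C f4 * X ^ 4 + C f3 * X ^ 3 + C f2 * X ^ 2 + C f1 * X + C f0

/-- The divided difference `(f(X) - f(a)) / (X - a)` of the sextic. -/
noncomputable def sexticDivDiff (f1 f2 f3 f4 f5 f6 a : R) : R[X] :=
  C f6 * ∑ i ∈ range 6, X ^ i * C a ^ (5 - i) + C f5 * ∑ i ∈ range 5, X ^ i * C a ^ (4 - i)
    + C f4 * ∑ i ∈ range 4, X ^ i * C a ^ (3 - i) + C f3 * ∑ i ∈ range 3, X ^ i * C a ^ (2 - i)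
    + C f2 * ∑ i ∈ range 2, X ^ i * C a ^ (1 - i) + C f1

theorem X_sub_C_mul_sexticDivDiff (f0 f1 f2 f3 f4 f5 f6 a : R) :
    (X - C a) * sexticDivDiff f1 f2 f3 f4 f5 f6 a
      = sextic f0 f1 f2 f3 f4 f5 f6 - C ((sextic f0 f1 f2 f3 f4 f5 f6).eval a) := by
  simp only [sexticDivDiff, sextic, sum_range_succ, sum_range_zero, eval_add, eval_mul, eval_C,
    eval_pow, eval_X, map_add, map_mul, map_pow]
  ring

theorem pfaffPolar_Amat (f1 f2 f3 f4 f5 f6 a b : R) :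
    pfaffPolar (Amat f1 f2 f3 f4 f5 f6 a) (Amat f1 f2 f3 f4 f5 f6 b)
      = 2 * (sexticDivDiff f1 f2 f3 f4 f5 f6 a).eval b := by
  simp only [pfaffPolar, Amat, sexticDivDiff, sum_range_succ, sum_range_zero, eval_zero, eval_add,
    eval_mul, eval_C, eval_pow, eval_X, of_apply, cons_val', cons_val_zero, cons_val_one,
    Matrix.cons_val]
  ring

theorem isAlternating_Amat (f1 f2 f3 f4 f5 f6 θ : R) :
    IsAlternating (Amat f1 f2 f3 f4 f5 f6 θ) := by
  refine ⟨fun i j => ?_, fun i => ?_⟩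
  · fin_cases i <;> fin_cases j <;> simp [Amat]
  · fin_cases i <;> simp [Amat]

theorem eval_eq_zero_of_X_sub_C_mul_eq_C_mul_prod {ι : Type*} [DecidableEq ι]
    {s : Finset ι} {θ : ι → R} {c : R} {q : R[X]} {i j : ι} (hi : i ∈ s) (hj : j ∈ s)
    (hij : i ≠ j) (h : (X - C (θ i)) * q = C c * ∏ k ∈ s, (X - C (θ k))) :
    q.eval (θ j) = 0 := by
  rw [← mul_prod_erase s _ hi, mul_left_comm] at h
  rw [(monic_X_sub_C (θ i)).isRegular.left h, eval_mul, eval_prod,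
    prod_eq_zero (mem_erase.2 ⟨hij.symm, hj⟩) (by simp), mul_zero]

end

/-- Equation (2.13): writing `Aᵢ = A(θᵢ)` for the roots `θ₁,…,θ₆` of `f`,
one has `Aᵢ* Aⱼ = − Aⱼ* Aᵢ` for all `i ≠ j`. -/
theorem stmt_5 (R : Type*) [CommRing R] (f0 f1 f2 f3 f4 f5 f6 : R) (θ : Fin 6 → R)
    (hf : C f6 * ∏ i : Fin 6, (X - C (θ i))
      = C f6 * X ^ 6 + C f5 * X ^ 5 + C f4 * X ^ 4 + C f3 * X ^ 3
        + C f2 * X ^ 2 + C f1 * X + C f0) :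
    ∀ i j : Fin 6, i ≠ j →
      starMat (Amat f1 f2 f3 f4 f5 f6 (θ i)) * Amat f1 f2 f3 f4 f5 f6 (θ j)
        = -(starMat (Amat f1 f2 f3 f4 f5 f6 (θ j)) * Amat f1 f2 f3 f4 f5 f6 (θ i)) := by
  intro i j hij
  replace hf : C f6 * ∏ k, (X - C (θ k)) = sextic f0 f1 f2 f3 f4 f5 f6 := hf
  have hroot : (sextic f0 f1 f2 f3 f4 f5 f6).eval (θ i) = 0 := by
    simp [← hf, eval_prod, prod_eq_zero (mem_univ i)]
  have hdiv : (X - C (θ i)) * sexticDivDiff f1 f2 f3 f4 f5 f6 (θ i)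
      = C f6 * ∏ k, (X - C (θ k)) := by
    rw [X_sub_C_mul_sexticDivDiff f0, hroot, C_0, sub_zero, hf]
  apply eq_neg_of_add_eq_zero_left
  rw [starMat_mul_add_starMat_mul (isAlternating_Amat ..) (isAlternating_Amat ..),
    pfaffPolar_Amat,
    eval_eq_zero_of_X_sub_C_mul_eq_C_mul_prod (mem_univ i) (mem_univ j) hij hdiv,
    mul_zero, zero_smul]
end

section
/- Let k be a field of characteristic ≠ 2 and f(x) = f₆x⁶+f₅x⁵+f₄x⁴+f₃x³+f₂x²+f₁x+f₀ ∈ k[x] with f₆ ≠ 0. Let K be a field extension of k and θ ∈ K with f(θ) = 0 and f'(θ) ≠ 0. Then the 6×6 matrix θ𝐆 − 𝐇 (with 𝐆, 𝐇 the matrices of the standard model, viewed over K) has rank 5, and its kernel is spanned by the vector (h₅(θ), h₄(θ), h₃(θ), θ², θ, 1)ᵀ. -/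
/-!
Over a field of characteristic `≠ 2` a symmetric matrix is determined by its quadratic form, so
`𝐆` and `𝐇` are explicit and `θ𝐆 − 𝐇` can be written down. Its first five rows form a
triangular system expressing `w₄, w₃, …, w₀` successively as multiples of `w₅`, so every kernel
vector is `w₅ • v` with `v = (h₅(θ), h₄(θ), h₃(θ), θ², θ, 1)`. Conversely the last row sends `v`
to `2 f(θ)`, so `v` spans the kernel as soon as `f(θ) = 0`; as `v ≠ 0`, the rank is `5`.
-/

open Matrix

theorem Matrix.eq_of_isSymm_of_dotProduct_mulVec_eq {R n : Type*} [CommRing R] [IsDomain R]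
    [Fintype n] [DecidableEq n] (h2 : (2 : R) ≠ 0) {A B : Matrix n n R}
    (hA : A.IsSymm) (hB : B.IsSymm) (h : ∀ u, u ⬝ᵥ (A *ᵥ u) = u ⬝ᵥ (B *ᵥ u)) : A = B := by
  ext i j
  have hii := h (Pi.single i 1)
  have hjj := h (Pi.single j 1)
  have hij := h (Pi.single i 1 + Pi.single j 1)
  simp only [mulVec_add, dotProduct_add, add_dotProduct, mulVec_single_one, single_dotProduct,
    one_mul, col_apply] at hii hjj hij
  rw [hA.apply i j, hB.apply i j] at hij
  exact mul_left_cancel₀ h2 (by linear_combination hij - hii - hjj)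

theorem Matrix.rank_add_one_of_forall_mulVec_eq_zero_iff {K m n : Type*} [Field K] [Fintype m]
    [Fintype n] {M : Matrix m n K} {v : n → K} (hv : v ≠ 0)
    (h : ∀ w, M *ᵥ w = 0 ↔ ∃ c : K, w = c • v) :
    M.rank + 1 = Fintype.card n := by
  have hker : LinearMap.ker M.mulVecLin = K ∙ v := by
    ext w
    simp only [LinearMap.mem_ker, mulVecLin_apply, h w, Submodule.mem_span_singleton, eq_comm]
  have := LinearMap.finrank_range_add_finrank_ker M.mulVecLin
  rwa [hker, finrank_span_singleton hv, Module.finrank_fintype_fun_eq_card] at this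

namespace StandardModel

def matG (R : Type*) [Zero R] [One R] : Matrix (Fin 6) (Fin 6) R :=
  !![0, 0, 0, 0, 0, 1;
     0, 0, 0, 0, 1, 0;
     0, 0, 0, 1, 0, 0;
     0, 0, 1, 0, 0, 0;
     0, 1, 0, 0, 0, 0;
     1, 0, 0, 0, 0, 0]

def matH {K : Type*} [Field K] (f0 f1 f2 f3 f4 f5 f6 : K) : Matrix (Fin 6) (Fin 6) K :=
  !![0, 0, 0, 0, 1, 0;
     0, 0, 0, 1, 0, 0;
     0, 0, 1 / 2 * f6⁻¹, -(1 / 2 * f6⁻¹ * f5), 0, 0;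
     0, 1, -(1 / 2 * f6⁻¹ * f5), -2 * f4 + 1 / 2 * f6⁻¹ * f5 ^ 2, -f3, 0;
     1, 0, 0, -f3, -2 * f2, -f1;
     0, 0, 0, 0, -f1, -2 * f0]

def kernelVec {K : Type*} [Field K] (f1 f2 f3 f4 f5 f6 θ : K) : Fin 6 → K :=
  ![2 * f6 * θ ^ 5 + 2 * f5 * θ ^ 4 + 2 * f4 * θ ^ 3 + 2 * f3 * θ ^ 2 + 2 * f2 * θ + f1,
    2 * f6 * θ ^ 4 + 2 * f5 * θ ^ 3 + 2 * f4 * θ ^ 2 + f3 * θ,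
    2 * f6 * θ ^ 3 + f5 * θ ^ 2,
    θ ^ 2, θ, 1]

section

variable {R : Type*} [CommRing R]

theorem matG_isSymm : (matG R).IsSymm := by
  ext i j; fin_cases i <;> fin_cases j <;> rfl

theorem dotProduct_matG_mulVec (u : Fin 6 → R) :
    u ⬝ᵥ (matG R *ᵥ u) = 2 * (u 0 * u 5 + u 1 * u 4 + u 2 * u 3) := by
  simp only [matG, mulVec, dotProduct, Fin.sum_univ_six, of_apply, cons_val', cons_val_fin_one,
    cons_val, cons_val_zero, cons_val_one]
  ring

theorem map_matG {S : Type*} [CommRing S] (φ : R →+* S) : (matG R).map φ = matG S := by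
  ext i j; fin_cases i <;> fin_cases j <;> simp [matG]

end

variable {K : Type*} [Field K]

theorem matH_isSymm (f0 f1 f2 f3 f4 f5 f6 : K) : (matH f0 f1 f2 f3 f4 f5 f6).IsSymm := by
  ext i j; fin_cases i <;> fin_cases j <;> rfl

theorem dotProduct_matH_mulVec (h2 : (2 : K) ≠ 0) (f0 f1 f2 f3 f4 f5 f6 : K) (u : Fin 6 → K) :
    u ⬝ᵥ (matH f0 f1 f2 f3 f4 f5 f6 *ᵥ u) = 2 * (u 0 * u 4 + u 1 * u 3 - f0 * u 5 ^ 2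
      - f1 * u 4 * u 5 - f2 * u 4 ^ 2 - f3 * u 3 * u 4 - f4 * u 3 ^ 2
      + (1 / 4) * f6⁻¹ * (u 2 - f5 * u 3) ^ 2) := by
  have h4 : (4 : K) ≠ 0 := by
    rw [show (4 : K) = 2 * 2 by norm_num]
    exact mul_ne_zero h2 h2
  simp only [matH, mulVec, dotProduct, Fin.sum_univ_six, of_apply, cons_val', cons_val_fin_one,
    cons_val, cons_val_zero, cons_val_one]
  field_simp
  ring

theorem map_matH {L : Type*} [Field L] (φ : K →+* L) (f0 f1 f2 f3 f4 f5 f6 : K) :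
    (matH f0 f1 f2 f3 f4 f5 f6).map φ = matH (φ f0) (φ f1) (φ f2) (φ f3) (φ f4) (φ f5) (φ f6) := by
  ext i j; fin_cases i <;> fin_cases j <;> simp [matH, map_ofNat]

theorem pencil_mulVec (f0 f1 f2 f3 f4 f5 f6 θ : K) (w : Fin 6 → K) :
    (θ • matG K - matH f0 f1 f2 f3 f4 f5 f6) *ᵥ w =
      ![θ * w 5 - w 4,
        θ * w 4 - w 3,
        θ * w 3 - 1 / 2 * f6⁻¹ * (w 2 - f5 * w 3),
        θ * w 2 - w 1 + 1 / 2 * f6⁻¹ * f5 * (w 2 - f5 * w 3) + 2 * f4 * w 3 + f3 * w 4,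
        θ * w 1 - w 0 + f3 * w 3 + 2 * f2 * w 4 + f1 * w 5,
        θ * w 0 + f1 * w 4 + 2 * f0 * w 5] := by
  ext i
  fin_cases i <;>
    simp only [matG, matH, mulVec, dotProduct, Fin.sum_univ_six, Matrix.sub_apply,
      Matrix.smul_apply, of_apply, cons_val', cons_val_fin_one, cons_val, cons_val_zero,
      cons_val_one, smul_eq_mul, Fin.zero_eta, Fin.mk_one, Fin.reduceFinMk, Fin.isValue] <;>
    ring

variable {f0 f1 f2 f3 f4 f5 f6 : K}

theorem pencil_mulVec_kernelVec (h2 : (2 : K) ≠ 0) (hf6 : f6 ≠ 0) (θ : K) :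
    (θ • matG K - matH f0 f1 f2 f3 f4 f5 f6) *ᵥ kernelVec f1 f2 f3 f4 f5 f6 θ =
      Pi.single 5 (2 * (f6 * θ ^ 6 + f5 * θ ^ 5 + f4 * θ ^ 4 + f3 * θ ^ 3 + f2 * θ ^ 2
        + f1 * θ + f0)) := by
  rw [pencil_mulVec]
  ext i
  fin_cases i <;>
    simp only [kernelVec, Pi.single_apply, cons_val, cons_val_zero, cons_val_one, Fin.zero_eta,
      Fin.mk_one, Fin.reduceFinMk, Fin.isValue, Fin.reduceEq, if_true, if_false] <;>
    field_simp <;> ring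

theorem eq_smul_kernelVec_of_pencil_mulVec_eq_zero (h2 : (2 : K) ≠ 0) (hf6 : f6 ≠ 0)
    {θ : K} {w : Fin 6 → K} (hw : (θ • matG K - matH f0 f1 f2 f3 f4 f5 f6) *ᵥ w = 0) :
    w = w 5 • kernelVec f1 f2 f3 f4 f5 f6 θ := by
  rw [pencil_mulVec] at hw
  simp only [cons_eq_zero_iff] at hw
  obtain ⟨e0, e1, e2, e3, e4, -⟩ := hw
  have hq : 1 / 2 * f6⁻¹ * (w 2 - f5 * w 3) = θ * w 3 := by linear_combination -e2
  have hw4 : w 4 = θ * w 5 := by linear_combination -e0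
  have hw3 : w 3 = θ ^ 2 * w 5 := by linear_combination -e1 + θ * hw4
  have hw2 : w 2 = (2 * f6 * θ ^ 3 + f5 * θ ^ 2) * w 5 := by
    field_simp at hq
    linear_combination hq + (2 * f6 * θ + f5) * hw3
  have hw1 : w 1 = (2 * f6 * θ ^ 4 + 2 * f5 * θ ^ 3 + 2 * f4 * θ ^ 2 + f3 * θ) * w 5 := by
    linear_combination -e3 + f5 * hq + θ * hw2 + (f5 * θ + 2 * f4) * hw3 + f3 * hw4
  have hw0 : w 0 = (2 * f6 * θ ^ 5 + 2 * f5 * θ ^ 4 + 2 * f4 * θ ^ 3 + 2 * f3 * θ ^ 2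
      + 2 * f2 * θ + f1) * w 5 := by
    linear_combination -e4 + θ * hw1 + f3 * hw3 + 2 * f2 * hw4
  ext i; fin_cases i <;> simp [kernelVec, hw0, hw1, hw2, hw3, hw4, mul_comm]

theorem pencil_mulVec_eq_zero_iff (h2 : (2 : K) ≠ 0) (hf6 : f6 ≠ 0) {θ : K}
    (hroot : f6 * θ ^ 6 + f5 * θ ^ 5 + f4 * θ ^ 4 + f3 * θ ^ 3 + f2 * θ ^ 2 + f1 * θ + f0 = 0)
    (w : Fin 6 → K) :
    (θ • matG K - matH f0 f1 f2 f3 f4 f5 f6) *ᵥ w = 0 ↔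
      ∃ c : K, w = c • kernelVec f1 f2 f3 f4 f5 f6 θ := by
  refine ⟨fun hw => ⟨w 5, eq_smul_kernelVec_of_pencil_mulVec_eq_zero h2 hf6 hw⟩, ?_⟩
  rintro ⟨c, rfl⟩
  rw [mulVec_smul, pencil_mulVec_kernelVec h2 hf6, hroot, mul_zero, Pi.single_zero, smul_zero]

theorem kernelVec_ne_zero (θ : K) : kernelVec f1 f2 f3 f4 f5 f6 θ ≠ 0 :=
  fun h => by simpa [kernelVec] using congrFun h 5

end StandardModel

open StandardModel

theorem stmt_9_general (k : Type*) [Field k] (h2 : (2 : k) ≠ 0)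
    (f0 f1 f2 f3 f4 f5 f6 : k) (hf6 : f6 ≠ 0)
    (MG MH : Matrix (Fin 6) (Fin 6) k)
    (hMGsymm : MG.IsSymm) (hMHsymm : MH.IsSymm)
    (hMG : ∀ u : Fin 6 → k,
      u 0 * u 5 + u 1 * u 4 + u 2 * u 3 = (1 / 2) * (u ⬝ᵥ (MG *ᵥ u)))
    (hMH : ∀ u : Fin 6 → k,
      u 0 * u 4 + u 1 * u 3 - f0 * u 5 ^ 2 - f1 * u 4 * u 5 - f2 * u 4 ^ 2
          - f3 * u 3 * u 4 - f4 * u 3 ^ 2 + (1 / 4) * f6⁻¹ * (u 2 - f5 * u 3) ^ 2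
        = (1 / 2) * (u ⬝ᵥ (MH *ᵥ u)))
    (K : Type*) [Field K] [Algebra k K] (θ : K)
    (hroot : algebraMap k K f6 * θ ^ 6 + algebraMap k K f5 * θ ^ 5
        + algebraMap k K f4 * θ ^ 4 + algebraMap k K f3 * θ ^ 3
        + algebraMap k K f2 * θ ^ 2 + algebraMap k K f1 * θ + algebraMap k K f0 = 0) :
    (θ • MG.map (algebraMap k K) - MH.map (algebraMap k K)).rank = 5 ∧
    ∀ w : Fin 6 → K,
      (θ • MG.map (algebraMap k K) - MH.map (algebraMap k K)) *ᵥ w = 0 ↔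
      ∃ c : K, w = c •
        ![2 * algebraMap k K f6 * θ ^ 5 + 2 * algebraMap k K f5 * θ ^ 4
            + 2 * algebraMap k K f4 * θ ^ 3 + 2 * algebraMap k K f3 * θ ^ 2
            + 2 * algebraMap k K f2 * θ + algebraMap k K f1,
          2 * algebraMap k K f6 * θ ^ 4 + 2 * algebraMap k K f5 * θ ^ 3
            + 2 * algebraMap k K f4 * θ ^ 2 + algebraMap k K f3 * θ,
          2 * algebraMap k K f6 * θ ^ 3 + algebraMap k K f5 * θ ^ 2,
          θ ^ 2, θ, 1] := by
  have hMG' : MG = matG k :=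
    eq_of_isSymm_of_dotProduct_mulVec_eq h2 hMGsymm matG_isSymm fun u => by
      rw [dotProduct_matG_mulVec, hMG u]; field_simp
  have hMH' : MH = matH f0 f1 f2 f3 f4 f5 f6 :=
    eq_of_isSymm_of_dotProduct_mulVec_eq h2 hMHsymm (matH_isSymm ..) fun u => by
      rw [dotProduct_matH_mulVec h2, hMH u]; field_simp
  have h2K : (2 : K) ≠ 0 := by
    rw [← map_ofNat (algebraMap k K) 2]
    exact (map_ne_zero _).mpr h2
  have hf6K : algebraMap k K f6 ≠ 0 := (map_ne_zero _).mpr hf6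
  rw [hMG', hMH', map_matG, map_matH]
  have hker := pencil_mulVec_eq_zero_iff h2K hf6K hroot
  have hrank := rank_add_one_of_forall_mulVec_eq_zero_iff (kernelVec_ne_zero θ) hker
  exact ⟨by simpa using hrank, hker⟩

/-- Equation (2.21): for a root `θ` of `f` with `f'(θ) ≠ 0`, the matrix
`θ𝐆 − 𝐇` has rank `5` and its kernel is spanned by
`(h₅(θ), h₄(θ), h₃(θ), θ², θ, 1)ᵀ`. -/
theorem stmt_9 (k : Type*) [Field k] (h2 : (2 : k) ≠ 0)
    (f0 f1 f2 f3 f4 f5 f6 : k) (hf6 : f6 ≠ 0)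
    (MG MH : Matrix (Fin 6) (Fin 6) k)
    (hMGsymm : MG.IsSymm) (hMHsymm : MH.IsSymm)
    (hMG : ∀ u : Fin 6 → k,
      u 0 * u 5 + u 1 * u 4 + u 2 * u 3 = (1 / 2) * (u ⬝ᵥ (MG *ᵥ u)))
    (hMH : ∀ u : Fin 6 → k,
      u 0 * u 4 + u 1 * u 3 - f0 * u 5 ^ 2 - f1 * u 4 * u 5 - f2 * u 4 ^ 2
          - f3 * u 3 * u 4 - f4 * u 3 ^ 2 + (1 / 4) * f6⁻¹ * (u 2 - f5 * u 3) ^ 2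
        = (1 / 2) * (u ⬝ᵥ (MH *ᵥ u)))
    (K : Type*) [Field K] [Algebra k K] (θ : K)
    (hroot : algebraMap k K f6 * θ ^ 6 + algebraMap k K f5 * θ ^ 5
        + algebraMap k K f4 * θ ^ 4 + algebraMap k K f3 * θ ^ 3
        + algebraMap k K f2 * θ ^ 2 + algebraMap k K f1 * θ + algebraMap k K f0 = 0)
    (hder : 6 * algebraMap k K f6 * θ ^ 5 + 5 * algebraMap k K f5 * θ ^ 4
        + 4 * algebraMap k K f4 * θ ^ 3 + 3 * algebraMap k K f3 * θ ^ 2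
        + 2 * algebraMap k K f2 * θ + algebraMap k K f1 ≠ 0) :
    (θ • MG.map (algebraMap k K) - MH.map (algebraMap k K)).rank = 5 ∧
    ∀ w : Fin 6 → K,
      (θ • MG.map (algebraMap k K) - MH.map (algebraMap k K)) *ᵥ w = 0 ↔
      ∃ c : K, w = c •
        ![2 * algebraMap k K f6 * θ ^ 5 + 2 * algebraMap k K f5 * θ ^ 4
            + 2 * algebraMap k K f4 * θ ^ 3 + 2 * algebraMap k K f3 * θ ^ 2
            + 2 * algebraMap k K f2 * θ + algebraMap k K f1,
          2 * algebraMap k K f6 * θ ^ 4 + 2 * algebraMap k K f5 * θ ^ 3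
            + 2 * algebraMap k K f4 * θ ^ 2 + algebraMap k K f3 * θ,
          2 * algebraMap k K f6 * θ ^ 3 + algebraMap k K f5 * θ ^ 2,
          θ ^ 2, θ, 1] :=
  stmt_9_general k h2 f0 f1 f2 f3 f4 f5 f6 hf6 MG MH hMGsymm hMHsymm hMG hMH K θ hroot
end

section
/- Let V be a finite-dimensional vector space over 𝔽₂, let β : V × V → 𝔽₂ be a symmetric bilinear form, and let c ∈ V be such that β(x, x + c) = 0 for all x ∈ V. Then the rank of β (the dimension of V minus the dimension of the radical {v ∈ V : β(v, w) = 0 for all w}) is even if and only if β(c, c) = 0. -/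
/-!
Over `𝔽₂` the hypothesis reads `β x x = β x c`. If `β` is alternating, its rank is even (split off
hyperbolic planes) and `β c c = 0`. Otherwise pick `v` with `β v v = 1` and split
`V = ⟨v⟩ ⊕ v^⊥`: the rank drops by one, on `v^⊥` the hypothesis holds with `c + v` in place of `c`,
and `β (c + v) (c + v) = β c c + 1`, so induction on `dim V` concludes.
-/

open Module (finrank)
open LinearMap (BilinForm)

namespace LinearMap.BilinForm

variable {K V : Type*} [Field K] [AddCommGroup V] [Module K V]

noncomputable def rank (B : BilinForm K V) : ℕ := finrank K V - finrank K (LinearMap.ker B)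

theorem ker_restrict_orthogonal_eq_comap {B : BilinForm K V} (hB : B.IsRefl) {U : Submodule K V}
    (hU : IsCompl U (B.orthogonal U)) :
    LinearMap.ker (B.restrict (B.orthogonal U)) =
      (LinearMap.ker B).comap (B.orthogonal U).subtype := by
  ext z
  simp only [LinearMap.mem_ker, Submodule.mem_comap, Submodule.coe_subtype]
  refine ⟨fun hz => LinearMap.ext fun y => ?_, fun hz => LinearMap.ext fun y => by simp [hz]⟩
  obtain ⟨u, hu, w, hw, rfl⟩ := Submodule.mem_sup.1 (hU.sup_eq_top ▸ Submodule.mem_top : y ∈ _)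
  have hzu : B z u = 0 := hB _ _ (z.2 u hu)
  have hzw : B z w = 0 := LinearMap.congr_fun hz ⟨w, hw⟩
  simp [hzu, hzw]

theorem ker_le_orthogonal {B : BilinForm K V} (hB : B.IsRefl) (U : Submodule K V) :
    LinearMap.ker B ≤ B.orthogonal U :=
  fun _ hz u _ => hB _ _ (LinearMap.congr_fun hz u)

theorem rank_eq_finrank_add_rank_restrict [FiniteDimensional K V] {B : BilinForm K V}
    (hB : B.IsRefl) {U : Submodule K V} (hU : IsCompl U (B.orthogonal U)) :
    B.rank = finrank K U + (B.restrict (B.orthogonal U)).rank := by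
  have hker : finrank K (LinearMap.ker (B.restrict (B.orthogonal U))) =
      finrank K (LinearMap.ker B) := by
    rw [ker_restrict_orthogonal_eq_comap hB hU]
    exact (Submodule.comapSubtypeEquivOfLe (ker_le_orthogonal hB U)).finrank_eq
  have hle := Submodule.finrank_mono (ker_le_orthogonal hB U)
  have hdim := Submodule.finrank_add_eq_of_isCompl hU
  simp only [rank, hker]
  omega

theorem IsAlt.eq_zero_of_orthogonal_pair {B : BilinForm K V} (hB : B.IsAlt) {u w : V}
    (huw : B u w ≠ 0) {a b : K} (hu : B u (a • u + b • w) = 0) (hw : B w (a • u + b • w) = 0) :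
    a = 0 ∧ b = 0 := by
  have hwu : B w u ≠ 0 := hB.neg_eq u w ▸ neg_ne_zero.2 huw
  simp only [map_add, map_smul, hB.self_eq_zero, smul_eq_mul, mul_zero, zero_add,
    add_zero] at hu hw
  exact ⟨(mul_eq_zero.1 hw).resolve_right hwu, (mul_eq_zero.1 hu).resolve_right huw⟩

theorem IsAlt.linearIndependent_pair {B : BilinForm K V} (hB : B.IsAlt) {u w : V}
    (huw : B u w ≠ 0) : LinearIndependent K ![u, w] :=
  LinearIndependent.pair_iff.2 fun _ _ h =>
    hB.eq_zero_of_orthogonal_pair huw (by rw [h, map_zero]) (by rw [h, map_zero])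

theorem IsAlt.isCompl_span_pair_orthogonal [FiniteDimensional K V] {B : BilinForm K V}
    (hB : B.IsAlt) {u w : V} (huw : B u w ≠ 0) :
    IsCompl (Submodule.span K (Set.range ![u, w]))
      (B.orthogonal (Submodule.span K (Set.range ![u, w]))) := by
  refine (isCompl_orthogonal_iff_disjoint hB.isRefl).2 <|
    Submodule.disjoint_def.2 fun x hx hxo => ?_
  obtain ⟨a, rfl⟩ := (Submodule.mem_span_range_iff_exists_fun K).1 hx
  have hmem (i : Fin 2) : ![u, w] i ∈ Submodule.span K (Set.range ![u, w]) :=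
    Submodule.subset_span (Set.mem_range_self i)
  rw [Fin.sum_univ_two] at hxo ⊢
  obtain ⟨ha₀, ha₁⟩ := hB.eq_zero_of_orthogonal_pair huw (hxo _ (hmem 0)) (hxo _ (hmem 1))
  simp [ha₀, ha₁]

theorem IsAlt.even_rank [FiniteDimensional K V] {B : BilinForm K V} (hB : B.IsAlt) :
    Even B.rank := by
  induction hn : finrank K V using Nat.strong_induction_on generalizing V with
  | _ n ih =>
    by_cases hB₀ : B = 0
    · rw [hB₀, rank, LinearMap.ker_zero, finrank_top, Nat.sub_self]
      exact Even.zero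
    obtain ⟨u, w, huw⟩ : ∃ u w, B u w ≠ 0 := by
      by_contra! h
      exact hB₀ (LinearMap.ext₂ h)
    have hU := hB.isCompl_span_pair_orthogonal huw
    have hdim := Submodule.finrank_add_eq_of_isCompl hU
    rw [finrank_span_eq_card (hB.linearIndependent_pair huw), Fintype.card_fin] at hdim
    rw [rank_eq_finrank_add_rank_restrict hB.isRefl hU,
      finrank_span_eq_card (hB.linearIndependent_pair huw), Fintype.card_fin]
    exact even_two.add (ih _ (by omega) (fun x => hB x) rfl)

section CharTwo

variable {V : Type*} [AddCommGroup V] [Module (ZMod 2) V] {B : BilinForm (ZMod 2) V} {c : V}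

theorem apply_self_eq_apply_of_forall_apply_add_eq_zero (hc : ∀ x, B x (x + c) = 0) (x : V) :
    B x x = B x c :=
  CharTwo.add_eq_zero.1 (by rw [← map_add]; exact hc x)

theorem add_mem_orthogonal_span_singleton (hc : ∀ x, B x (x + c) = 0) (v : V) :
    c + v ∈ B.orthogonal (ZMod 2 ∙ v) := by
  intro n hn
  obtain ⟨a, rfl⟩ := Submodule.mem_span_singleton.1 hn
  rw [map_smul, LinearMap.smul_apply, map_add,
    ← apply_self_eq_apply_of_forall_apply_add_eq_zero hc, CharTwo.add_self_eq_zero, smul_zero]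

theorem restrict_orthogonal_span_singleton_apply_add_eq_zero (hB : B.IsRefl)
    (hc : ∀ x, B x (x + c) = 0) (v : V) (x : B.orthogonal (ZMod 2 ∙ v)) :
    B.restrict _ x (x + ⟨c + v, add_mem_orthogonal_span_singleton hc v⟩) = 0 := by
  change B x (x + (c + v)) = 0
  rw [← add_assoc, map_add, hc, hB _ _ (x.2 v (Submodule.mem_span_singleton_self v)), add_zero]

theorem apply_add_add_of_symm (hB : ∀ x y, B x y = B y x) (x y : V) :
    B (x + y) (x + y) = B x x + B y y := by
  simp only [map_add, LinearMap.add_apply]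
  rw [hB y x, add_assoc, ← add_assoc (B x y), CharTwo.add_self_eq_zero, zero_add]

end CharTwo

end LinearMap.BilinForm

open LinearMap.BilinForm

/-- Lemma 3.1(iii) (linear-algebra content): for a symmetric bilinear form `β`
on a finite-dimensional `𝔽₂`-vector space with `β(x, x + c) = 0` for all `x`,
the rank of `β` is even if and only if `β(c, c) = 0`. -/
theorem stmt_15 (V : Type*) [AddCommGroup V] [Module (ZMod 2) V]
    [FiniteDimensional (ZMod 2) V]
    (β : V →ₗ[ZMod 2] V →ₗ[ZMod 2] ZMod 2)
    (hsymm : ∀ x y : V, β x y = β y x)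
    (c : V) (hc : ∀ x : V, β x (x + c) = 0) :
    Even (Module.finrank (ZMod 2) V - Module.finrank (ZMod 2) (LinearMap.ker β)) ↔
      β c c = 0 := by
  change Even (LinearMap.BilinForm.rank β) ↔ _
  induction hn : finrank (ZMod 2) V using Nat.strong_induction_on generalizing V c with
  | _ n ih =>
    have hrefl : IsRefl β := fun x y h => hsymm x y ▸ h
    by_cases hβ : IsAlt β
    · exact iff_of_true hβ.even_rank (hβ.self_eq_zero c)
    obtain ⟨v, hv⟩ := not_forall.1 hβ
    have hv₀ : v ≠ 0 := by rintro rfl; simp at hv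
    have hU := isCompl_span_singleton_orthogonal hv
    have hdim := Submodule.finrank_add_eq_of_isCompl hU
    rw [finrank_span_singleton hv₀] at hdim
    have ih_perp := ih (finrank (ZMod 2) (orthogonal β (ZMod 2 ∙ v))) (by omega) _ (restrict β _)
      (fun x y => hsymm x y) _ (restrict_orthogonal_span_singleton_apply_add_eq_zero hrefl hc v) rfl
    rw [rank_eq_finrank_add_rank_restrict hrefl hU, finrank_span_singleton hv₀, add_comm,
      Nat.even_add_one, ih_perp]
    change ¬β (c + v) (c + v) = 0 ↔ _
    rw [apply_add_add_of_symm hsymm, Fin.eq_one_of_ne_zero _ hv]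
    generalize β c c = a
    revert a
    decide
end

section
/- Let R be a commutative ring and let a₁, a₂, a₃, m₁, m₂, m₃, r, c be units of R satisfying a₁a₂a₃ = r³c² and m₁m₂m₃ = r³cd for some d ∈ R. Set bᵢ = mᵢ²/aᵢ and μ = c·∏_{i=1}^{3}(1 + mᵢ/aᵢ). Then ∏_{i=1}^{3}(aᵢ + bᵢ + 2mᵢ) = r³μ², and moreover μ = d·∏_{i=1}^{3}(1 + mᵢ/bᵢ) = d·∏_{i=1}^{3}(1 + aᵢ/mᵢ). -/
/-!
Writing `bᵢ = mᵢ²/aᵢ`, each factor is a square up to `aᵢ`: `aᵢ + bᵢ + 2mᵢ = aᵢ(1 + mᵢ/aᵢ)²`,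
so the first identity is `a₁a₂a₃ = r³c²`. For the second, `aᵢ(1 + mᵢ/aᵢ) = aᵢ + mᵢ = mᵢ(1 + aᵢ/mᵢ)`
gives `r³c² ∏(1 + mᵢ/aᵢ) = r³cd ∏(1 + aᵢ/mᵢ)`, and `r³c` may be cancelled since it divides the
unit `r³c² = a₁a₂a₃`. Finally `mᵢ/bᵢ = aᵢ/mᵢ`.
-/

section

variable {R : Type*} [CommRing R] {a b m : R}

theorem add_sq_mul_add_two_mul_of_mul_eq_one (h : a * b = 1) :
    a + m ^ 2 * b + 2 * m = a * (1 + m * b) ^ 2 := by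
  linear_combination (-(2 * m) - m ^ 2 * b) * h

theorem mul_one_add_mul_of_mul_eq_one (h : a * b = 1) : a * (1 + m * b) = a + m := by
  linear_combination m * h

end

section

variable {ι R : Type*} [Fintype ι] [CommRing R] {a ia m im : ι → R}

theorem prod_add_sq_mul_add_two_mul (ha : ∀ i, a i * ia i = 1) :
    ∏ i, (a i + m i ^ 2 * ia i + 2 * m i) = (∏ i, a i) * (∏ i, (1 + m i * ia i)) ^ 2 := by
  simp only [add_sq_mul_add_two_mul_of_mul_eq_one (ha _), Finset.prod_mul_distrib,
    Finset.prod_pow]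

theorem prod_mul_prod_one_add_mul_eq (ha : ∀ i, a i * ia i = 1) (hm : ∀ i, m i * im i = 1) :
    (∏ i, a i) * ∏ i, (1 + m i * ia i) = (∏ i, m i) * ∏ i, (1 + a i * im i) := by
  simp only [← Finset.prod_mul_distrib, mul_one_add_mul_of_mul_eq_one (ha _),
    mul_one_add_mul_of_mul_eq_one (hm _), add_comm (a _)]

end

theorem stmt_16_general (R : Type*) [CommRing R] (a m ia im : Fin 3 → R) (r c d : R)
    (ha : ∀ i, a i * ia i = 1) (hm : ∀ i, m i * im i = 1)
    (h1 : a 0 * a 1 * a 2 = r ^ 3 * c ^ 2)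
    (h2 : m 0 * m 1 * m 2 = r ^ 3 * c * d) :
    (∏ i : Fin 3, (a i + m i ^ 2 * ia i + 2 * m i))
        = r ^ 3 * (c * ∏ i : Fin 3, (1 + m i * ia i)) ^ 2 ∧
    c * ∏ i : Fin 3, (1 + m i * ia i)
        = d * ∏ i : Fin 3, (1 + m i * (a i * im i * im i)) ∧
    c * ∏ i : Fin 3, (1 + m i * ia i)
        = d * ∏ i : Fin 3, (1 + a i * im i) := by
  rw [← Fin.prod_univ_three] at h1 h2
  have hu : IsUnit (r ^ 3 * c) := by
    have : IsUnit (∏ i, a i) := IsUnit.prod_univ_iff.mpr fun i => .of_mul_eq_one _ (ha i)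
    rw [h1, sq, ← mul_assoc] at this
    exact isUnit_of_mul_isUnit_left this
  have hμ : c * ∏ i, (1 + m i * ia i) = d * ∏ i, (1 + a i * im i) :=
    hu.mul_left_cancel <| by
      calc r ^ 3 * c * (c * ∏ i, (1 + m i * ia i))
          = (∏ i, a i) * ∏ i, (1 + m i * ia i) := by rw [h1]; ring
        _ = (∏ i, m i) * ∏ i, (1 + a i * im i) := prod_mul_prod_one_add_mul_eq ha hm
        _ = r ^ 3 * c * (d * ∏ i, (1 + a i * im i)) := by rw [h2]; ring
  have hmb : ∀ i, m i * (a i * im i * im i) = a i * im i := fun i => by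
    linear_combination a i * im i * hm i
  refine ⟨by rw [prod_add_sq_mul_add_two_mul ha, h1]; ring, by simpa only [hmb] using hμ, hμ⟩

/-- Lemma 4.15 (componentwise form): if `a₁a₂a₃ = r³c²` and `m₁m₂m₃ = r³cd`,
with `bᵢ = mᵢ²/aᵢ` and `μ = c·∏(1 + mᵢ/aᵢ)`, then
`∏(aᵢ + bᵢ + 2mᵢ) = r³μ²` and `μ = d·∏(1 + mᵢ/bᵢ) = d·∏(1 + aᵢ/mᵢ)`. -/
theorem stmt_16 (R : Type*) [CommRing R] (a m ia im : Fin 3 → R) (r c d : R)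
    (hr : IsUnit r) (hc : IsUnit c)
    (ha : ∀ i, a i * ia i = 1) (hm : ∀ i, m i * im i = 1)
    (h1 : a 0 * a 1 * a 2 = r ^ 3 * c ^ 2)
    (h2 : m 0 * m 1 * m 2 = r ^ 3 * c * d) :
    (∏ i : Fin 3, (a i + m i ^ 2 * ia i + 2 * m i))
        = r ^ 3 * (c * ∏ i : Fin 3, (1 + m i * ia i)) ^ 2 ∧
    c * ∏ i : Fin 3, (1 + m i * ia i)
        = d * ∏ i : Fin 3, (1 + m i * (a i * im i * im i)) ∧
    c * ∏ i : Fin 3, (1 + m i * ia i)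
        = d * ∏ i : Fin 3, (1 + a i * im i) :=
  stmt_16_general R a m ia im r c d ha hm h1 h2
end
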